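/- arXiv:2602.19589 — 13 statements merged into one kernel-verified Lean document; each statement's English description precedes it below -/
import Mathlib

section
/- Let A be a complex Banach space equipped with two bilinear, associative multiplications ⋆ and • that are both submultiplicative (‖a⋆b‖ ≤ ‖a‖‖b‖ and ‖a•b‖ ≤ ‖a‖‖b‖ for all a,b ∈ A), and that satisfy (1) a ⋆ (b • c) = b • (a ⋆ c) and (2) (a ⋆ b) • c = (a • c) ⋆ b for all a,b,c ∈ A. Then the product a ∘ b := (1/2)(a ⋆ b − b • a) is bilinear, associative, and satisfies ‖a ∘ b‖ ≤ ‖a‖‖b‖; hence (A, ∘) is a Banach algebra. -/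
/-- Let `A` be a complex Banach space with two bilinear, associative,
submultiplicative products `⋆` and `•` satisfying the mixed relations
(1) `a ⋆ (b • c) = b • (a ⋆ c)` and (2) `(a ⋆ b) • c = (a • c) ⋆ b`.
Then `a ∘ b := (1/2)(a ⋆ b − b • a)` is bilinear, associative and satisfies
`‖a ∘ b‖ ≤ ‖a‖ ‖b‖`, so `(A, ∘)` is a Banach algebra. -/
theorem mixed_lie_product_banach_algebra
    {A : Type*} [NormedAddCommGroup A] [NormedSpace ℂ A] [CompleteSpace A]
    (star bul : A → A → A)
    (star_add_left : ∀ a b c : A, star (a + b) c = star a c + star b c)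
    (star_add_right : ∀ a b c : A, star a (b + c) = star a b + star a c)
    (star_smul_left : ∀ (z : ℂ) (a b : A), star (z • a) b = z • star a b)
    (star_smul_right : ∀ (z : ℂ) (a b : A), star a (z • b) = z • star a b)
    (bul_add_left : ∀ a b c : A, bul (a + b) c = bul a c + bul b c)
    (bul_add_right : ∀ a b c : A, bul a (b + c) = bul a b + bul a c)
    (bul_smul_left : ∀ (z : ℂ) (a b : A), bul (z • a) b = z • bul a b)
    (bul_smul_right : ∀ (z : ℂ) (a b : A), bul a (z • b) = z • bul a b)
    (star_assoc : ∀ a b c : A, star (star a b) c = star a (star b c))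
    (bul_assoc : ∀ a b c : A, bul (bul a b) c = bul a (bul b c))
    (star_norm : ∀ a b : A, ‖star a b‖ ≤ ‖a‖ * ‖b‖)
    (bul_norm : ∀ a b : A, ‖bul a b‖ ≤ ‖a‖ * ‖b‖)
    (rel1 : ∀ a b c : A, star a (bul b c) = bul b (star a c))
    (rel2 : ∀ a b c : A, bul (star a b) c = star (bul a c) b)
    (circ : A → A → A)
    (hcirc : ∀ a b : A, circ a b = (2 : ℂ)⁻¹ • (star a b - bul b a)) :
    (∀ a b c : A, circ (a + b) c = circ a c + circ b c) ∧
    (∀ a b c : A, circ a (b + c) = circ a b + circ a c) ∧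
    (∀ (z : ℂ) (a b : A), circ (z • a) b = z • circ a b) ∧
    (∀ (z : ℂ) (a b : A), circ a (z • b) = z • circ a b) ∧
    (∀ a b c : A, circ (circ a b) c = circ a (circ b c)) ∧
    (∀ a b : A, ‖circ a b‖ ≤ ‖a‖ * ‖b‖) := by
  have star_sub_left : ∀ a b c : A, star (a - b) c = star a c - star b c := by
    intro a b c
    rw [sub_eq_add_neg, star_add_left, ← neg_one_smul ℂ b, star_smul_left,
      neg_one_smul, ← sub_eq_add_neg]
  have star_sub_right : ∀ a b c : A, star a (b - c) = star a b - star a c := by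
    intro a b c
    rw [sub_eq_add_neg, star_add_right, ← neg_one_smul ℂ c, star_smul_right,
      neg_one_smul, ← sub_eq_add_neg]
  have bul_sub_left : ∀ a b c : A, bul (a - b) c = bul a c - bul b c := by
    intro a b c
    rw [sub_eq_add_neg, bul_add_left, ← neg_one_smul ℂ b, bul_smul_left,
      neg_one_smul, ← sub_eq_add_neg]
  have bul_sub_right : ∀ a b c : A, bul a (b - c) = bul a b - bul a c := by
    intro a b c
    rw [sub_eq_add_neg, bul_add_right, ← neg_one_smul ℂ c, bul_smul_right,
      neg_one_smul, ← sub_eq_add_neg]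
  refine ⟨?_, ?_, ?_, ?_, ?_, ?_⟩
  · intro a b c
    rw [hcirc, hcirc, hcirc, star_add_left, bul_add_right]
    module
  · intro a b c
    rw [hcirc, hcirc, hcirc, star_add_right, bul_add_left]
    module
  · intro z a b
    rw [hcirc, hcirc, star_smul_left, bul_smul_right]
    module
  · intro z a b
    rw [hcirc, hcirc, star_smul_right, bul_smul_left]
    module
  · intro a b c
    rw [hcirc, hcirc, hcirc, hcirc, star_smul_left, bul_smul_right,
      star_smul_right, bul_smul_left, star_sub_left, bul_sub_right,
      star_sub_right, bul_sub_left, star_assoc, bul_assoc,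
      ← rel2 b c a, ← rel1 a c b]
    module
  · intro a b
    rw [hcirc, norm_smul]
    have h1 : ‖star a b - bul b a‖ ≤ ‖a‖ * ‖b‖ + ‖b‖ * ‖a‖ :=
      (norm_sub_le _ _).trans (add_le_add (star_norm a b) (bul_norm b a))
    have h2 : ‖(2 : ℂ)⁻¹‖ = 2⁻¹ := by norm_num
    rw [h2]
    nlinarith [norm_nonneg (star a b - bul b a)]
end

section
/- Let A be a complex Banach space equipped with two bilinear, associative multiplications ⋆ and • that are both submultiplicative (‖a⋆b‖ ≤ ‖a‖‖b‖ and ‖a•b‖ ≤ ‖a‖‖b‖ for all a,b ∈ A), and that satisfy (1) a ⋆ (b • c) = b • (a ⋆ c) and (2) (a ⋆ b) • c = (a • c) ⋆ b for all a,b,c ∈ A. Then the product a ∘⁺ b := (1/2)(a ⋆ b + b • a) is bilinear, associative, and satisfies ‖a ∘⁺ b‖ ≤ ‖a‖‖b‖; hence (A, ∘⁺) is a Banach algebra. -/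
/-- Let `A` be a complex Banach space with two bilinear, associative,
submultiplicative products `⋆` and `•` satisfying the mixed relations
(1) `a ⋆ (b • c) = b • (a ⋆ c)` and (2) `(a ⋆ b) • c = (a • c) ⋆ b`.
Then `a ∘⁺ b := (1/2)(a ⋆ b + b • a)` is bilinear, associative and satisfies
`‖a ∘ b‖ ≤ ‖a‖ ‖b‖`, so `(A, ∘⁺)` is a Banach algebra. -/
theorem mixed_jordan_product_banach_algebra
    {A : Type*} [NormedAddCommGroup A] [NormedSpace ℂ A] [CompleteSpace A]
    (star bul : A → A → A)
    (star_add_left : ∀ a b c : A, star (a + b) c = star a c + star b c)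
    (star_add_right : ∀ a b c : A, star a (b + c) = star a b + star a c)
    (star_smul_left : ∀ (z : ℂ) (a b : A), star (z • a) b = z • star a b)
    (star_smul_right : ∀ (z : ℂ) (a b : A), star a (z • b) = z • star a b)
    (bul_add_left : ∀ a b c : A, bul (a + b) c = bul a c + bul b c)
    (bul_add_right : ∀ a b c : A, bul a (b + c) = bul a b + bul a c)
    (bul_smul_left : ∀ (z : ℂ) (a b : A), bul (z • a) b = z • bul a b)
    (bul_smul_right : ∀ (z : ℂ) (a b : A), bul a (z • b) = z • bul a b)
    (star_assoc : ∀ a b c : A, star (star a b) c = star a (star b c))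
    (bul_assoc : ∀ a b c : A, bul (bul a b) c = bul a (bul b c))
    (star_norm : ∀ a b : A, ‖star a b‖ ≤ ‖a‖ * ‖b‖)
    (bul_norm : ∀ a b : A, ‖bul a b‖ ≤ ‖a‖ * ‖b‖)
    (rel1 : ∀ a b c : A, star a (bul b c) = bul b (star a c))
    (rel2 : ∀ a b c : A, bul (star a b) c = star (bul a c) b)
    (circ : A → A → A)
    (hcirc : ∀ a b : A, circ a b = (2 : ℂ)⁻¹ • (star a b + bul b a)) :
    (∀ a b c : A, circ (a + b) c = circ a c + circ b c) ∧
    (∀ a b c : A, circ a (b + c) = circ a b + circ a c) ∧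
    (∀ (z : ℂ) (a b : A), circ (z • a) b = z • circ a b) ∧
    (∀ (z : ℂ) (a b : A), circ a (z • b) = z • circ a b) ∧
    (∀ a b c : A, circ (circ a b) c = circ a (circ b c)) ∧
    (∀ a b : A, ‖circ a b‖ ≤ ‖a‖ * ‖b‖) := by
  refine ⟨?_, ?_, ?_, ?_, ?_, ?_⟩
  · intro a b c
    simp [hcirc, star_add_left, bul_add_right, smul_add]
    abel
  · intro a b c
    simp [hcirc, star_add_right, bul_add_left, smul_add]
    abel
  · intro z a b
    simp [hcirc, star_smul_left, bul_smul_right, smul_add, smul_comm z]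
  · intro z a b
    simp [hcirc, star_smul_right, bul_smul_left, smul_add, smul_comm z]
  · intro a b c
    simp only [hcirc, star_add_left, star_add_right, bul_add_left, bul_add_right,
      star_smul_left, star_smul_right, bul_smul_left, bul_smul_right, smul_add]
    rw [star_assoc, bul_assoc, rel1 a c b, ← rel2 b c a]
    abel
  · intro a b
    rw [hcirc]
    calc ‖(2 : ℂ)⁻¹ • (star a b + bul b a)‖
        = (2:ℝ)⁻¹ * ‖star a b + bul b a‖ := by
          rw [norm_smul]; norm_num
      _ ≤ (2:ℝ)⁻¹ * (‖star a b‖ + ‖bul b a‖) := by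
          gcongr; exact norm_add_le _ _
      _ ≤ (2:ℝ)⁻¹ * (‖a‖*‖b‖ + ‖b‖*‖a‖) := by
          gcongr; exacts [star_norm a b, bul_norm b a]
      _ = ‖a‖ * ‖b‖ := by ring
end

section
/- Let G be a finite group and define on the space M of complex matrices indexed by G × G the product (ω • τ)(s,t) = ω(s,t) · Σ_{u∈G} τ(u, t s⁻¹ u). Then • is bilinear and associative on M, and the matrix trace is multiplicative with respect to it: tr(ω • τ) = (tr ω)(tr τ) for all ω, τ ∈ M. -/
open scoped BigOperators

/-- The dual product on `Matrix G G ℂ` (the lift of the Fourier-algebra product):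
`(ω • τ)(s,t) = ω(s,t) Σ_{u∈G} τ(u, t s⁻¹ u)`. -/
noncomputable def bulConv {G : Type*} [Group G] [Fintype G]
    (ω τ : Matrix G G ℂ) : Matrix G G ℂ :=
  Matrix.of fun s t => ω s t * ∑ u : G, τ u (t * s⁻¹ * u)

/-- `•` is bilinear and associative on `M = Matrix G G ℂ`, and the
matrix trace is multiplicative with respect to it. -/
theorem bulConv_bilinear_assoc_trace {G : Type*} [Group G] [Fintype G] :
    (∀ ω ω' τ : Matrix G G ℂ, bulConv (ω + ω') τ = bulConv ω τ + bulConv ω' τ) ∧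
    (∀ ω τ τ' : Matrix G G ℂ, bulConv ω (τ + τ') = bulConv ω τ + bulConv ω τ') ∧
    (∀ (z : ℂ) (ω τ : Matrix G G ℂ), bulConv (z • ω) τ = z • bulConv ω τ) ∧
    (∀ (z : ℂ) (ω τ : Matrix G G ℂ), bulConv ω (z • τ) = z • bulConv ω τ) ∧
    (∀ ω τ σ : Matrix G G ℂ, bulConv (bulConv ω τ) σ = bulConv ω (bulConv τ σ)) ∧
    (∀ ω τ : Matrix G G ℂ, (bulConv ω τ).trace = ω.trace * τ.trace) := by
  refine ⟨?_, ?_, ?_, ?_, ?_, ?_⟩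
  · intro ω ω' τ
    ext s t
    simp [bulConv, add_mul]
  · intro ω τ τ'
    ext s t
    simp [bulConv, Finset.sum_add_distrib, mul_add]
  · intro z ω τ
    ext s t
    simp [bulConv, mul_assoc]
  · intro z ω τ
    ext s t
    simp only [bulConv, Matrix.of_apply, Matrix.smul_apply, smul_eq_mul,
      Finset.mul_sum]
    exact Finset.sum_congr rfl fun u _ => by ring
  · intro ω τ σ
    ext s t
    have h : ∀ u v : G, t * s⁻¹ * u * u⁻¹ * v = t * s⁻¹ * v := by
      intro u v; group
    simp only [bulConv, Matrix.of_apply, h]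
    rw [Finset.mul_sum, ← Finset.sum_mul, ← Finset.mul_sum, mul_assoc]
  · intro ω τ
    simp only [Matrix.trace, Matrix.diag, bulConv, Matrix.of_apply,
      mul_inv_cancel, one_mul]
    rw [Finset.sum_mul]
end

section
/- Let G be a finite group and let ⋆ and • be the two products on M = Matrix G G ℂ given by (ω ⋆ τ)(s,t) = Σ_{r∈G} τ(r,r) ω(s r⁻¹, t r⁻¹) and (ω • τ)(s,t) = ω(s,t) Σ_{u∈G} τ(u, t s⁻¹ u). Then for all ρ, ω, τ ∈ M one has the degeneracy relations ρ ⋆ (ω • τ) = (tr τ) · (ρ ⋆ ω) and ρ • (ω ⋆ τ) = (tr τ) · (ρ • ω). -/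
open scoped BigOperators

/-- `(ω ⋆ τ)(s,t) = Σ_{r∈G} τ(r,r) ω(s r⁻¹, t r⁻¹)`. -/
noncomputable def starConv {G : Type*} [Group G] [Fintype G]
    (ω τ : Matrix G G ℂ) : Matrix G G ℂ :=
  Matrix.of fun s t => ∑ r : G, τ r r * ω (s * r⁻¹) (t * r⁻¹)

/-- the degeneracy relations
`ρ ⋆ (ω • τ) = (tr τ) · (ρ ⋆ ω)` and `ρ • (ω ⋆ τ) = (tr τ) · (ρ • ω)`. -/
theorem degeneracy_relations {G : Type*} [Group G] [Fintype G]
    (ρ ω τ : Matrix G G ℂ) :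
    starConv ρ (bulConv ω τ) = τ.trace • starConv ρ ω ∧
    bulConv ρ (starConv ω τ) = τ.trace • bulConv ρ ω := by
  constructor
  · ext s t
    simp only [starConv, bulConv, Matrix.of_apply, Matrix.smul_apply, Matrix.trace,
      Matrix.diag, smul_eq_mul, Finset.mul_sum, Finset.sum_mul]
    refine Finset.sum_congr rfl fun r _ => ?_
    simp only [mul_inv_cancel, one_mul]
    refine Finset.sum_congr rfl fun u _ => ?_
    ring
  · ext s t
    have key : ∀ r : G, (∑ u : G, ω (u * r⁻¹) (t * s⁻¹ * u * r⁻¹)) = ∑ v : G, ω v (t * s⁻¹ * v) :=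
      fun r => Fintype.sum_equiv (Equiv.mulRight r⁻¹) _ _ fun u => by
        simp [Equiv.mulRight, mul_assoc]
    simp only [starConv, bulConv, Matrix.of_apply, Matrix.smul_apply, Matrix.trace,
      Matrix.diag, smul_eq_mul]
    rw [Finset.sum_comm]
    simp_rw [← Finset.mul_sum, key]
    rw [Finset.sum_mul, Finset.mul_sum]
    refine Finset.sum_congr rfl fun r _ => ?_
    ring
end

section
/- Let G be a finite group, M = Matrix G G ℂ with the products (ω ⋆ τ)(s,t) = Σ_{r∈G} τ(r,r) ω(s r⁻¹, t r⁻¹) and (ω • τ)(s,t) = ω(s,t) Σ_{u∈G} τ(u, t s⁻¹ u), and let M₀ = {ω ∈ M : tr ω = 0} be the trace-zero matrices. Then the mixed Lie-type product ρ ∘ τ := (1/2)(ρ ⋆ τ − τ • ρ) maps M₀ × M₀ into M₀ and is associative on M₀: (ρ ∘ ω) ∘ τ = ρ ∘ (ω ∘ τ) for all ρ, ω, τ ∈ M₀. -/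
open scoped BigOperators

/-- The mixed Lie-type product `ρ ∘ τ = (1/2)(ρ ⋆ τ − τ • ρ)`. -/
noncomputable def circConv {G : Type*} [Group G] [Fintype G]
    (ρ τ : Matrix G G ℂ) : Matrix G G ℂ :=
  (2 : ℂ)⁻¹ • (starConv ρ τ - bulConv τ ρ)

section Aux
variable {G : Type*} [Group G] [Fintype G]

noncomputable def Fv (ρ : Matrix G G ℂ) (g : G) : ℂ := ∑ u : G, ρ u (g * u)

lemma circ_apply (ρ τ : Matrix G G ℂ) (s t : G) :
    circConv ρ τ s t = 2⁻¹ * ((∑ r : G, τ r r * ρ (s * r⁻¹) (t * r⁻¹))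
      - τ s t * Fv ρ (t * s⁻¹)) := rfl

lemma Fv_one (ρ : Matrix G G ℂ) : Fv ρ 1 = ρ.trace := by
  simp [Fv, Matrix.trace, Matrix.diag]

lemma Fv_shift (ρ : Matrix G G ℂ) (g x : G) :
    (∑ u : G, ρ (u * x⁻¹) (g * u * x⁻¹)) = Fv ρ g := by
  rw [Fv]
  exact (Fintype.sum_equiv (Equiv.mulRight x) _ _ (fun u => by
    simp [mul_assoc])).symm

lemma Fv_circ (ρ ω : Matrix G G ℂ) (hω : ω.trace = 0) (g : G) :
    Fv (circConv ρ ω) g = -(2⁻¹ * (Fv ρ g * Fv ω g)) := by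
  have h1 : ∀ u : G, g * u * u⁻¹ = g := fun u => by simp
  calc Fv (circConv ρ ω) g
      = ∑ u : G, 2⁻¹ * ((∑ x : G, ω x x * ρ (u * x⁻¹) (g * u * x⁻¹))
          - ω u (g * u) * Fv ρ g) := by
        unfold Fv; refine Finset.sum_congr rfl fun u _ => ?_
        rw [circ_apply, h1]; rfl
    _ = 2⁻¹ * ((∑ u : G, ∑ x : G, ω x x * ρ (u * x⁻¹) (g * u * x⁻¹))
          - Fv ω g * Fv ρ g) := by
        rw [← Finset.mul_sum, Finset.sum_sub_distrib, ← Finset.sum_mul]; rfl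
    _ = 2⁻¹ * (ω.trace * Fv ρ g - Fv ω g * Fv ρ g) := by
        rw [Finset.sum_comm]
        congr 2
        rw [Matrix.trace, Finset.sum_mul]
        exact Finset.sum_congr rfl fun x _ => by
          rw [← Finset.mul_sum, Fv_shift]; rfl
    _ = -(2⁻¹ * (Fv ρ g * Fv ω g)) := by rw [hω]; ring

end Aux

/-- `∘` maps trace-zero matrices to trace-zero matrices and is
associative on the subspace `M₀` of trace-zero matrices. -/
theorem circConv_tracezero_assoc {G : Type*} [Group G] [Fintype G] :
    (∀ ρ τ : Matrix G G ℂ, ρ.trace = 0 → τ.trace = 0 → (circConv ρ τ).trace = 0) ∧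
    (∀ ρ ω τ : Matrix G G ℂ, ρ.trace = 0 → ω.trace = 0 → τ.trace = 0 →
      circConv (circConv ρ ω) τ = circConv ρ (circConv ω τ)) := by
  constructor
  · intro ρ τ hρ hτ
    have key : ∀ r : G, (∑ s : G, ρ (s * r⁻¹) (s * r⁻¹)) = 0 := fun r => by
      rw [← hρ, Matrix.trace]
      exact (Fintype.sum_equiv (Equiv.mulRight r) _ _ (fun s => by simp)).symm
    have hF : Fv ρ 1 = 0 := by rw [Fv_one, hρ]
    rw [Matrix.trace]
    have h1 : ∀ s : G, (circConv ρ τ).diag s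
        = 2⁻¹ * (∑ r : G, τ r r * ρ (s * r⁻¹) (s * r⁻¹)) := fun s => by
      rw [Matrix.diag_apply, circ_apply]; simp [hF]
    rw [Finset.sum_congr rfl (fun s _ => h1 s), ← Finset.mul_sum, Finset.sum_comm]
    have h2 : ∀ r : G, (∑ s : G, τ r r * ρ (s * r⁻¹) (s * r⁻¹)) = 0 := fun r => by
      rw [← Finset.mul_sum, key, mul_zero]
    rw [Finset.sum_congr rfl (fun r _ => h2 r)]
    simp
  · intro ρ ω τ hρ hω hτ
    ext s t
    have harg : ∀ r : G, (t * r⁻¹) * (s * r⁻¹)⁻¹ = t * s⁻¹ := fun r => by group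
    have hFω1 : Fv ω 1 = 0 := by rw [Fv_one, hω]
    have hA : ∀ r : G, circConv ρ ω (s * r⁻¹) (t * r⁻¹)
        = 2⁻¹ * ((∑ x : G, ω x x * ρ (s * r⁻¹ * x⁻¹) (t * r⁻¹ * x⁻¹))
          - ω (s * r⁻¹) (t * r⁻¹) * Fv ρ (t * s⁻¹)) := fun r => by
      rw [circ_apply, harg r]
    have hB : ∀ y : G, circConv ω τ y y
        = 2⁻¹ * (∑ r : G, τ r r * ω (y * r⁻¹) (y * r⁻¹)) := fun y => by
      rw [circ_apply]; simp [Fv_one, hω]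
    have key : (∑ y : G, (∑ r : G, τ r r * ω (y * r⁻¹) (y * r⁻¹)) * ρ (s * y⁻¹) (t * y⁻¹))
        = ∑ r : G, τ r r * (∑ x : G, ω x x * ρ (s * r⁻¹ * x⁻¹) (t * r⁻¹ * x⁻¹)) := by
      simp_rw [Finset.sum_mul, Finset.mul_sum]
      rw [Finset.sum_comm]
      refine Finset.sum_congr rfl fun r _ => ?_
      refine (Fintype.sum_equiv (Equiv.mulRight r) _ _ (fun x => ?_)).symm
      have e1 : x * r * r⁻¹ = x := by group
      have e2 : s * (x * r)⁻¹ = s * r⁻¹ * x⁻¹ := by group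
      have e3 : t * (x * r)⁻¹ = t * r⁻¹ * x⁻¹ := by group
      simp only [Equiv.coe_mulRight, e1, e2, e3, mul_assoc]
    have expandL : circConv (circConv ρ ω) τ s t
        = 2⁻¹ * ((∑ r : G, τ r r * (2⁻¹ * ((∑ x : G, ω x x * ρ (s * r⁻¹ * x⁻¹) (t * r⁻¹ * x⁻¹))
            - ω (s * r⁻¹) (t * r⁻¹) * Fv ρ (t * s⁻¹))))
          - τ s t * (-(2⁻¹ * (Fv ρ (t * s⁻¹) * Fv ω (t * s⁻¹))))) := by
      rw [circ_apply, Fv_circ ρ ω hω]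
      congr 1
      congr 1
      exact Finset.sum_congr rfl fun r _ => by rw [hA r]
    have expandR : circConv ρ (circConv ω τ) s t
        = 2⁻¹ * ((∑ y : G, (2⁻¹ * (∑ r : G, τ r r * ω (y * r⁻¹) (y * r⁻¹))) * ρ (s * y⁻¹) (t * y⁻¹))
          - (2⁻¹ * ((∑ r : G, τ r r * ω (s * r⁻¹) (t * r⁻¹)) - τ s t * Fv ω (t * s⁻¹))) * Fv ρ (t * s⁻¹)) := by
      rw [circ_apply, circ_apply]
      congr 2
      exact Finset.sum_congr rfl fun y _ => by rw [hB y]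
    rw [expandL, expandR]
    have L2 : (∑ r : G, τ r r * (2⁻¹ * ((∑ x : G, ω x x * ρ (s * r⁻¹ * x⁻¹) (t * r⁻¹ * x⁻¹))
            - ω (s * r⁻¹) (t * r⁻¹) * Fv ρ (t * s⁻¹))))
        = 2⁻¹ * ((∑ r : G, τ r r * (∑ x : G, ω x x * ρ (s * r⁻¹ * x⁻¹) (t * r⁻¹ * x⁻¹)))
            - (∑ r : G, τ r r * ω (s * r⁻¹) (t * r⁻¹)) * Fv ρ (t * s⁻¹)) := by
      rw [Finset.sum_congr rfl (fun r _ => show _ = 2⁻¹ * (τ r r * (∑ x : G, ω x x * ρ (s * r⁻¹ * x⁻¹) (t * r⁻¹ * x⁻¹))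
            - (τ r r * ω (s * r⁻¹) (t * r⁻¹)) * Fv ρ (t * s⁻¹)) by ring),
        ← Finset.mul_sum, Finset.sum_sub_distrib, Finset.sum_mul]
    have R2 : (∑ y : G, (2⁻¹ * (∑ r : G, τ r r * ω (y * r⁻¹) (y * r⁻¹))) * ρ (s * y⁻¹) (t * y⁻¹))
        = 2⁻¹ * (∑ r : G, τ r r * (∑ x : G, ω x x * ρ (s * r⁻¹ * x⁻¹) (t * r⁻¹ * x⁻¹))) := by
      rw [Finset.sum_congr rfl (fun y _ => mul_assoc (2:ℂ)⁻¹ _ _), ← Finset.mul_sum, key]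
    rw [L2, R2]
    ring
end

section
/- Let G be a finite group, M = Matrix G G ℂ with the products (ω ⋆ τ)(s,t) = Σ_{r∈G} τ(r,r) ω(s r⁻¹, t r⁻¹) and (ω • τ)(s,t) = ω(s,t) Σ_{u∈G} τ(u, t s⁻¹ u), and define ρ ∘ τ := (1/2)(ρ ⋆ τ − τ • ρ). Then the generalized associativity law (ρ ∘ ω₀) ∘ τ = ρ ∘ (ω₀ ∘ τ) holds for ALL ρ, τ ∈ M, provided only that the middle element ω₀ has trace zero. In particular, M is a bimodule over the algebra (M₀, ∘) of trace-zero matrices. -/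
open scoped BigOperators

/-- generalized associativity, valid for all `ρ, τ ∈ M`
provided only that the middle element `ω₀` has trace zero. -/
theorem circConv_middle_assoc {G : Type*} [Group G] [Fintype G]
    (ρ τ ω₀ : Matrix G G ℂ) (hω₀ : ω₀.trace = 0) :
    circConv (circConv ρ ω₀) τ = circConv ρ (circConv ω₀ τ) := by
  simp only [Matrix.trace, Matrix.diag] at hω₀
  ext s t
  simp only [circConv, starConv, bulConv, Matrix.smul_apply, Matrix.sub_apply,
    Matrix.of_apply, smul_eq_mul, Finset.mul_sum, Finset.sum_sub_distrib, mul_sub,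
    sub_mul, Finset.sum_mul, mul_inv_rev, inv_inv, mul_assoc, inv_mul_cancel_left,
    mul_inv_cancel_left, mul_inv_cancel, mul_one]
  have key1 : (∑ x : G, ∑ i : G,
        2⁻¹ * (τ x x * (2⁻¹ * (ω₀ i i * ρ (s * (x⁻¹ * i⁻¹)) (t * (x⁻¹ * i⁻¹)))))) =
      ∑ x : G, ∑ i : G,
        2⁻¹ * (2⁻¹ * (τ i i * (ω₀ (x * i⁻¹) (x * i⁻¹) * ρ (s * x⁻¹) (t * x⁻¹)))) := by
    conv_rhs => rw [Finset.sum_comm]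
    refine Finset.sum_congr rfl fun a _ => ?_
    refine Fintype.sum_equiv (Equiv.mulRight a) _ _ fun y => ?_
    simp only [Equiv.coe_mulRight, mul_inv_rev, mul_inv_cancel_right, mul_assoc, mul_inv_cancel, mul_one]
    ring
  have key2 : (∑ x : G, ∑ i : G,
        2⁻¹ * (τ x x * (2⁻¹ * (ω₀ (s * x⁻¹) (t * x⁻¹) * ρ i (t * (s⁻¹ * i)))))) =
      ∑ x : G, ∑ i : G,
        2⁻¹ * (2⁻¹ * (τ i i * (ω₀ (s * i⁻¹) (t * i⁻¹) * ρ x (t * (s⁻¹ * x))))) := by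
    conv_rhs => rw [Finset.sum_comm]
    exact Finset.sum_congr rfl fun a _ => Finset.sum_congr rfl fun b _ => by ring
  have key4 : (∑ x : G, ∑ i : G,
        2⁻¹ * (τ s t * (2⁻¹ * (ω₀ x (t * (s⁻¹ * x)) * ρ i (t * (s⁻¹ * i)))))) =
      ∑ x : G, ∑ i : G,
        2⁻¹ * (2⁻¹ * (τ s t * (ω₀ i (t * (s⁻¹ * i)) * ρ x (t * (s⁻¹ * x))))) := by
    conv_rhs => rw [Finset.sum_comm]
    exact Finset.sum_congr rfl fun a _ => Finset.sum_congr rfl fun b _ => by ring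
  have key3 : (∑ x : G, ∑ i : G,
        2⁻¹ * (τ s t * (2⁻¹ * (ω₀ i i * ρ (x * i⁻¹) (t * (s⁻¹ * (x * i⁻¹))))))) = 0 := by
    rw [Finset.sum_comm]
    have h : ∀ i : G, (∑ x : G,
          2⁻¹ * (τ s t * (2⁻¹ * (ω₀ i i * ρ (x * i⁻¹) (t * (s⁻¹ * (x * i⁻¹))))))) =
        ω₀ i i * (2⁻¹ * (τ s t * (2⁻¹ * ∑ y : G, ρ y (t * (s⁻¹ * y))))) := by
      intro i
      rw [Finset.mul_sum, Finset.mul_sum, Finset.mul_sum, Finset.mul_sum]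
      refine Fintype.sum_equiv (Equiv.mulRight i⁻¹) _ _ fun x => ?_
      simp only [Equiv.coe_mulRight]
      ring
    simp only [h]
    rw [← Finset.sum_mul, hω₀, zero_mul]
  have key5 : (∑ x : G, ∑ i : G,
        2⁻¹ * (2⁻¹ * (τ x x * (ω₀ i i * ρ (s * x⁻¹) (t * x⁻¹))))) = 0 := by
    refine Finset.sum_eq_zero fun x _ => ?_
    have : (∑ i : G, 2⁻¹ * (2⁻¹ * (τ x x * (ω₀ i i * ρ (s * x⁻¹) (t * x⁻¹))))) =
        (∑ i : G, ω₀ i i) * (2⁻¹ * (2⁻¹ * (τ x x * ρ (s * x⁻¹) (t * x⁻¹)))) := by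
      rw [Finset.sum_mul]
      exact Finset.sum_congr rfl fun i _ => by ring
    rw [this, hω₀, zero_mul]
  rw [key1, key2, key3, key4, key5]
  ring
end

section
/- Let G be a finite group of order n, M = Matrix G G ℂ with the products (ω ⋆ τ)(s,t) = Σ_{r∈G} τ(r,r) ω(s r⁻¹, t r⁻¹) and (ω • τ)(s,t) = ω(s,t) Σ_{u∈G} τ(u, t s⁻¹ u), M₀ the trace-zero matrices, and ρ ∘ τ := (1/2)(ρ ⋆ τ − τ • ρ). Define E ∈ M by E(s,t) = 2·(δ_{s,e} δ_{t,e} − 1/n), where e is the identity of G (i.e., E = 2(δ_e δ_e* − χχ*) with χ the normalized constant vector). Then E ∈ M₀ and E is a two-sided identity for ∘ on M₀: E ∘ ρ = ρ = ρ ∘ E for all ρ ∈ M₀. -/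
open scoped BigOperators

/-- The matrix `E = 2(δ_e δ_e* − χχ*)`, i.e.
`E(s,t) = 2 (δ_{s,e} δ_{t,e} − 1/|G|)`. -/
noncomputable def unitE (G : Type*) [Group G] [Fintype G] [DecidableEq G] :
    Matrix G G ℂ :=
  Matrix.of fun s t =>
    (2 : ℂ) * ((if s = (1 : G) then (1 : ℂ) else 0) *
      (if t = (1 : G) then (1 : ℂ) else 0) - 1 / (Fintype.card G : ℂ))

/-!
Write `E = 2 (δ_e δ_e* − J/n)` with `J` the all-ones matrix. In `E ⋆ ρ` the `δ_e δ_e*` part picks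
out the diagonal of `ρ` and the `J` part only sees `tr ρ = 0`, while `ρ • E` multiplies `ρ`
entrywise by the sums `Σ_u E(u, g u) = 2 δ_{g,e} − 2`; together `E ∘ ρ = ρ`. On the other side
`ρ ⋆ E = 2ρ − (2/n) T` and `E • ρ = (2 δ_{s,e} δ_{t,e} − 2/n) T` with
`T(s,t) = Σ_u ρ(u, t s⁻¹ u)`, and `T(e,e) = tr ρ = 0` gives `ρ ∘ E = ρ`.
-/

section

variable {G : Type*} [Group G] [Fintype G]

theorem Matrix.sum_apply_mul_inv_mul_inv {α : Type*} [AddCommMonoid α] (A : Matrix G G α)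
    (s t : G) : ∑ r, A (s * r⁻¹) (t * r⁻¹) = ∑ u, A u (t * s⁻¹ * u) :=
  Fintype.sum_equiv ((Equiv.inv G).trans (Equiv.mulLeft s)) _ _ fun r => by
    simp [mul_assoc]

theorem card_mul_div_card {K : Type*} [Field K] [CharZero K] (a : K) :
    (Fintype.card G : K) * (a / Fintype.card G) = a :=
  mul_div_cancel₀ _ (Nat.cast_ne_zero.mpr Fintype.card_ne_zero)

variable [DecidableEq G]

theorem unitE_apply (s t : G) :
    unitE G s t = 2 * (if s = 1 ∧ t = 1 then 1 else 0) - 2 / Fintype.card G := by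
  simp only [unitE, Matrix.of_apply, ite_and]
  split_ifs <;> ring

theorem trace_unitE : (unitE G).trace = 0 := by
  simp [Matrix.trace, unitE_apply, Finset.sum_sub_distrib, card_mul_div_card]

theorem sum_mul_unitE_apply_mul_inv (f : G → ℂ) (s t : G) :
    ∑ r, f r * unitE G (s * r⁻¹) (t * r⁻¹) =
      2 * (if s = t then f s else 0) - 2 / Fintype.card G * ∑ r, f r := by
  have hdelta (r : G) : (s * r⁻¹ = 1 ∧ t * r⁻¹ = 1) ↔ (r = s ∧ s = t) := by
    simp only [mul_inv_eq_one]
    constructor <;> rintro ⟨rfl, rfl⟩ <;> exact ⟨rfl, rfl⟩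
  simp [unitE_apply, hdelta, ite_and, mul_sub, Finset.sum_sub_distrib, Finset.sum_mul, mul_comm]

theorem sum_unitE_apply_mul (g : G) :
    ∑ u, unitE G u (g * u) = 2 * (if g = 1 then 1 else 0) - 2 := by
  have hdelta (u : G) : (u = 1 ∧ g * u = 1) ↔ (u = 1 ∧ g = 1) := by
    constructor <;> rintro ⟨rfl, h⟩ <;> simpa using h
  simp [unitE_apply, hdelta, ite_and, Finset.sum_sub_distrib, card_mul_div_card]

theorem sum_unitE_apply_self_mul (f : G → ℂ) :
    ∑ r, unitE G r r * f r = 2 * f 1 - 2 / Fintype.card G * ∑ r, f r := by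
  simp [unitE_apply, sub_mul, Finset.sum_sub_distrib, Finset.mul_sum]

theorem circConv_unitE_left {ρ : Matrix G G ℂ} (hρ : ρ.trace = 0) :
    circConv (unitE G) ρ = ρ := by
  ext s t
  simp only [circConv, starConv, bulConv, Matrix.smul_apply, Matrix.sub_apply, Matrix.of_apply,
    smul_eq_mul, sum_mul_unitE_apply_mul_inv, sum_unitE_apply_mul, mul_inv_eq_one]
  rw [show ∑ r, ρ r r = 0 from hρ]
  by_cases h : s = t
  · subst h; simp
  · simp only [h, Ne.symm h, if_false]
    ring

theorem circConv_unitE_right {ρ : Matrix G G ℂ} (hρ : ρ.trace = 0) :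
    circConv ρ (unitE G) = ρ := by
  ext s t
  simp only [circConv, starConv, bulConv, Matrix.smul_apply, Matrix.sub_apply, Matrix.of_apply,
    smul_eq_mul, sum_unitE_apply_self_mul, ρ.sum_apply_mul_inv_mul_inv, inv_one, mul_one]
  rw [unitE_apply]
  split_ifs with h
  · obtain ⟨rfl, rfl⟩ := h
    simp only [inv_one, mul_one, one_mul]
    rw [show ∑ r, ρ r r = 0 from hρ]
    ring
  · ring

end

/-- `E` has trace zero and is a two-sided identity for `∘` on the
trace-zero matrices `M₀`. -/
theorem unitE_identity {G : Type*} [Group G] [Fintype G] [DecidableEq G] :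
    (unitE G).trace = 0 ∧
    ∀ ρ : Matrix G G ℂ, ρ.trace = 0 →
      circConv (unitE G) ρ = ρ ∧ circConv ρ (unitE G) = ρ :=
  ⟨trace_unitE, fun _ hρ => ⟨circConv_unitE_left hρ, circConv_unitE_right hρ⟩⟩
end

section
/- Let G be a finite group, M = Matrix G G ℂ with the products (ω ⋆ τ)(s,t) = Σ_{r∈G} τ(r,r) ω(s r⁻¹, t r⁻¹) and (ω • τ)(s,t) = ω(s,t) Σ_{u∈G} τ(u, t s⁻¹ u), M₀ the trace-zero matrices, and ρ ∘ τ := (1/2)(ρ ⋆ τ − τ • ρ). Let d : M → (G → ℂ) denote the diagonal map d(ω)(s) = ω(s,s), and let ∗ denote convolution of functions on G: (f ∗ g)(s) = Σ_{r∈G} f(s r⁻¹) g(r). Then for all ρ, τ ∈ M₀ one has d(ρ ∘ τ) = (1/2)·(d(ρ) ∗ d(τ)); equivalently, the map ρ ↦ (1/2)·d(ρ) is an algebra homomorphism from (M₀, ∘) into the group convolution algebra of G. -/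
open scoped BigOperators

/-- The diagonal map `d(ω)(s) = ω(s,s)`. -/
def diagMap {G : Type*} [Group G] [Fintype G] (ω : Matrix G G ℂ) : G → ℂ :=
  fun s => ω s s

/-- Convolution of functions on a finite group: `(f ∗ g)(s) = Σ_r f(s r⁻¹) g(r)`. -/
noncomputable def convFn {G : Type*} [Group G] [Fintype G] (f g : G → ℂ) : G → ℂ :=
  fun s => ∑ r : G, f (s * r⁻¹) * g r

/-- for trace-zero `ρ, τ` one has `d(ρ ∘ τ) = (1/2)(d(ρ) ∗ d(τ))`,
i.e. `ρ ↦ (1/2) d(ρ)` is a homomorphism from `(M₀, ∘)` into the group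
convolution algebra of `G`. -/
theorem diag_of_circConv {G : Type*} [Group G] [Fintype G]
    (ρ τ : Matrix G G ℂ) (hρ : ρ.trace = 0) (hτ : τ.trace = 0) :
    diagMap (circConv ρ τ) = (2 : ℂ)⁻¹ • convFn (diagMap ρ) (diagMap τ) := by
  funext s
  have hb : (∑ u : G, ρ u (s * s⁻¹ * u)) = 0 := by
    simpa [Matrix.trace, Matrix.diag] using hρ
  simp only [diagMap, circConv, starConv, bulConv, convFn, Matrix.smul_apply,
    Matrix.sub_apply, Matrix.of_apply, hb, mul_zero, sub_zero, Pi.smul_apply,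
    smul_eq_mul]
  congr 1
  exact Finset.sum_congr rfl fun r _ => mul_comm _ _
end

section
/- Let G be a finite group, M = Matrix G G ℂ with the products (ω ⋆ τ)(s,t) = Σ_{r∈G} τ(r,r) ω(s r⁻¹, t r⁻¹) and (ω • τ)(s,t) = ω(s,t) Σ_{u∈G} τ(u, t s⁻¹ u), M₀ the trace-zero matrices, and ρ ∘ τ := (1/2)(ρ ⋆ τ − τ • ρ). Define the Fourier coefficient map F : M → (G → ℂ) by F(ω)(g) = Σ_{u∈G} ω(u, g u) (i.e., F(ω)(g) = tr(ω λ(g)) where λ is the left regular representation). Then for all ρ, τ ∈ M₀ and all g ∈ G, F(ρ ∘ τ)(g) = −(1/2)·F(ρ)(g)·F(τ)(g); equivalently, the map ω ↦ −(1/2)·F(ω) is an algebra homomorphism from (M₀, ∘) into the algebra of complex functions on G with pointwise multiplication. -/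
open scoped BigOperators

/-- The Fourier coefficient map `F(ω)(g) = Σ_{u∈G} ω(u, g u) = tr(ω λ(g))`. -/
noncomputable def fourierCoeffM {G : Type*} [Group G] [Fintype G]
    (ω : Matrix G G ℂ) : G → ℂ :=
  fun g => ∑ u : G, ω u (g * u)

/-- for trace-zero `ρ, τ` and every `g ∈ G`,
`F(ρ ∘ τ)(g) = −(1/2) F(ρ)(g) F(τ)(g)`; i.e. `ω ↦ −(1/2) F(ω)` is a
homomorphism from `(M₀, ∘)` into the pointwise-multiplication algebra on `G`. -/
theorem fourierCoeffM_of_circConv {G : Type*} [Group G] [Fintype G]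
    (ρ τ : Matrix G G ℂ) (hρ : ρ.trace = 0) (hτ : τ.trace = 0) (g : G) :
    fourierCoeffM (circConv ρ τ) g =
      -(2 : ℂ)⁻¹ * fourierCoeffM ρ g * fourierCoeffM τ g := by
  have h1 : fourierCoeffM (starConv ρ τ) g = 0 := by
    have : fourierCoeffM (starConv ρ τ) g
        = ∑ r : G, τ r r * ∑ u : G, ρ (u * r⁻¹) (g * u * r⁻¹) := by
      simp only [fourierCoeffM, starConv, Matrix.of_apply]
      rw [Finset.sum_comm]
      simp [Finset.mul_sum]
    rw [this]
    have h2 : ∀ r : G, (∑ u : G, ρ (u * r⁻¹) (g * u * r⁻¹)) = fourierCoeffM ρ g := by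
      intro r
      rw [fourierCoeffM, ← Equiv.sum_comp (Equiv.mulRight r)]
      simp [mul_assoc]
    simp only [h2, ← Finset.sum_mul]
    have : (∑ r : G, τ r r) = 0 := hτ
    rw [this, zero_mul]
  have h2 : fourierCoeffM (bulConv τ ρ) g = fourierCoeffM τ g * fourierCoeffM ρ g := by
    simp only [fourierCoeffM, bulConv, Matrix.of_apply]
    have : ∀ u : G, g * u * u⁻¹ = g := by intro u; group
    simp only [this, ← Finset.sum_mul]
  have : fourierCoeffM (circConv ρ τ) g
      = (2 : ℂ)⁻¹ * (fourierCoeffM (starConv ρ τ) g - fourierCoeffM (bulConv τ ρ) g) := by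
    simp [fourierCoeffM, circConv, Matrix.sub_apply, mul_sub, Finset.sum_sub_distrib,
      Finset.mul_sum]
  rw [this, h1, h2]; ring
end

section
/- Let G be a finite group with at least two elements, M = Matrix G G ℂ with the products (ω ⋆ τ)(s,t) = Σ_{r∈G} τ(r,r) ω(s r⁻¹, t r⁻¹) and (ω • τ)(s,t) = ω(s,t) Σ_{u∈G} τ(u, t s⁻¹ u), M₀ the trace-zero matrices, and ρ ∘ τ := (1/2)(ρ ⋆ τ − τ • ρ). Then the algebra (M₀, ∘) is noncommutative: there exist ρ, τ ∈ M₀ with ρ ∘ τ ≠ τ ∘ ρ. -/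
open scoped BigOperators

/-! Take `a ≠ 1`, `ρ = E(1, a)` and `τ = E(a⁻¹, 1)`. Both have zero diagonal, so both `⋆`-terms
vanish and `ρ ∘ τ = -½ τ • ρ`, `τ ∘ ρ = -½ ρ • τ`. At the entry `(a⁻¹, 1)` the first is
`-½ Σ_u ρ(u, a u) = -½`, while the second is `-½ ρ(a⁻¹, 1) ⋯ = 0`. -/

open Matrix

section

variable {G : Type*} [Group G] [Fintype G]

theorem starConv_eq_zero_of_diag_eq_zero (ω : Matrix G G ℂ) {τ : Matrix G G ℂ}
    (hτ : τ.diag = 0) : starConv ω τ = 0 := by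
  have hτ' (r : G) : τ r r = 0 := congr_fun hτ r
  ext s t
  simp [starConv, hτ']

theorem circConv_eq_of_diag_eq_zero (ρ : Matrix G G ℂ) {τ : Matrix G G ℂ}
    (hτ : τ.diag = 0) : circConv ρ τ = -(2 : ℂ)⁻¹ • bulConv τ ρ := by
  rw [circConv, starConv_eq_zero_of_diag_eq_zero ρ hτ, zero_sub, smul_neg, neg_smul]

variable [DecidableEq G]

theorem sum_single_apply_mul_left {R : Type*} [AddCommMonoid R] (i j g : G) (c : R) :
    ∑ u, single i j c u (g * u) = if j = g * i then c else 0 := by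
  simp only [single_apply]
  rw [Fintype.sum_eq_single i fun u hu => if_neg fun h => hu h.1.symm]
  simp

theorem bulConv_single_apply_same (i j : G) (c : ℂ) (ω : Matrix G G ℂ) :
    bulConv (single i j c) ω i j = c * ∑ u, ω u (j * i⁻¹ * u) := by
  simp [bulConv]

theorem bulConv_single_apply_of_ne {i j s t : G} (h : ¬(i = s ∧ j = t)) (c : ℂ)
    (ω : Matrix G G ℂ) : bulConv (single i j c) ω s t = 0 := by
  simp [bulConv, single_apply_of_ne _ _ c _ _ h]

end

/-- if `|G| ≥ 2` then `(M₀, ∘)` is noncommutative. -/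
theorem circConv_noncommutative {G : Type*} [Group G] [Fintype G]
    (hG : 2 ≤ Fintype.card G) :
    ∃ ρ τ : Matrix G G ℂ, ρ.trace = 0 ∧ τ.trace = 0 ∧
      circConv ρ τ ≠ circConv τ ρ := by
  classical
  obtain ⟨a, ha⟩ := Fintype.exists_ne_of_one_lt_card hG 1
  have ha' : a⁻¹ ≠ 1 := inv_ne_one.mpr ha
  refine ⟨single 1 a 1, single a⁻¹ 1 1, trace_single_eq_of_ne _ _ _ ha.symm,
    trace_single_eq_of_ne _ _ _ ha', fun h => ?_⟩
  have h := congr_fun₂ h a⁻¹ 1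
  rw [circConv_eq_of_diag_eq_zero _ (diag_single_of_ne _ _ _ ha'),
    circConv_eq_of_diag_eq_zero _ (diag_single_of_ne _ _ _ ha.symm)] at h
  have hτρ : bulConv (single a⁻¹ 1 (1 : ℂ)) (single 1 a 1) a⁻¹ 1 = 1 := by
    rw [bulConv_single_apply_same, sum_single_apply_mul_left]
    simp
  have hρτ : bulConv (single 1 a (1 : ℂ)) (single a⁻¹ 1 1) a⁻¹ 1 = 0 :=
    bulConv_single_apply_of_ne (fun h => ha h.2) _ _
  rw [Matrix.smul_apply, Matrix.smul_apply, hτρ, hρτ] at h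
  norm_num at h
end

section
/- Let G be a finite group, M = Matrix G G ℂ with the products (ω ⋆ τ)(s,t) = Σ_{r∈G} τ(r,r) ω(s r⁻¹, t r⁻¹) and (ω • τ)(s,t) = ω(s,t) Σ_{u∈G} τ(u, t s⁻¹ u), and let M₀ be the trace-zero matrices. Then the shuffle identity (ρ ⋆ τ) ⋆ ω = ρ ⋆ (τ • ω + τ ⋆ ω) holds for all ρ, τ, ω ∈ M₀. -/
open scoped BigOperators

/-- the shuffle identity
`(ρ ⋆ τ) ⋆ ω = ρ ⋆ (τ • ω + τ ⋆ ω)` on the trace-zero matrices. -/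
theorem shuffle_identity {G : Type*} [Group G] [Fintype G]
    (ρ τ ω : Matrix G G ℂ) (hρ : ρ.trace = 0) (hτ : τ.trace = 0)
    (hω : ω.trace = 0) :
    starConv (starConv ρ τ) ω = starConv ρ (bulConv τ ω + starConv τ ω) := by
  have hω' : ∑ u : G, ω u u = 0 := hω
  ext s t
  simp only [starConv, bulConv, Matrix.of_apply, Matrix.add_apply,
    mul_inv_cancel_right, mul_inv_cancel, one_mul]
  have hdiag : ∀ r : G, τ r r * ∑ u : G, ω u (r * r⁻¹ * u) = 0 := by
    intro r
    simp [hω']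
  calc (∑ r : G, ω r r * ∑ q : G, τ q q * ρ (s * r⁻¹ * q⁻¹) (t * r⁻¹ * q⁻¹))
      = ∑ r : G, ∑ q : G,
          ω r r * (τ q q * ρ (s * r⁻¹ * q⁻¹) (t * r⁻¹ * q⁻¹)) := by
        simp [Finset.mul_sum]
    _ = ∑ p : G × G,
          ω p.1 p.1 * (τ p.2 p.2 * ρ (s * p.1⁻¹ * p.2⁻¹) (t * p.1⁻¹ * p.2⁻¹)) := by
        rw [← Finset.sum_product']; rfl
    _ = ∑ p : G × G,
          (ω p.2 p.2 * τ (p.1 * p.2⁻¹) (p.1 * p.2⁻¹)) * ρ (s * p.1⁻¹) (t * p.1⁻¹) := by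
        apply Fintype.sum_equiv (Equiv.mk (fun p => (p.2 * p.1, p.1))
          (fun p => (p.2, p.1 * p.2⁻¹)) (by intro p; simp) (by intro p; simp))
        intro p
        simp [mul_assoc, mul_inv_rev]
    _ = ∑ r : G, ∑ q : G,
          (ω q q * τ (r * q⁻¹) (r * q⁻¹)) * ρ (s * r⁻¹) (t * r⁻¹) := by
        rw [← Finset.sum_product']; rfl
    _ = ∑ r : G,
          (τ r r * ∑ u : G, ω u u
            + ∑ q : G, ω q q * τ (r * q⁻¹) (r * q⁻¹)) * ρ (s * r⁻¹) (t * r⁻¹) := by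
        refine Finset.sum_congr rfl fun r _ => ?_
        rw [hω', mul_zero, zero_add, Finset.sum_mul]
end

section
/- Let A be a complex Banach algebra and ε : A → ℂ a nonzero continuous algebra homomorphism (character), and let A₀ = ker ε. Suppose that A₀ is commutative (a b = b a for all a, b ∈ A₀) and that A₀ equals the closed linear span of the set of products {a b : a, b ∈ A₀}. Then A is commutative. -/
/-! If `ε a = 0 = ε b` then `x * a` and `b * x` lie in `ker ε` for every `x`, so commutativity of
`ker ε` makes `x` commute with `a * b`. The centralizer of `x` is a closed subspace, hence contains
the closed span of such products, which is `ker ε`: the augmentation ideal is central. Writing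
`a = ε a • e + (a - ε a • e)` with `ε e = 1` then shows that any two elements commute. -/

theorem commute_mul_of_commute_mul_of_commute_mul {S : Type*} [Semigroup S] {x a b : S}
    (hxa : Commute (x * a) b) (hbx : Commute a (b * x)) : Commute x (a * b) :=
  calc x * (a * b) = b * (x * a) := by rw [← mul_assoc]; exact hxa.eq
    _ = a * (b * x) := by rw [← mul_assoc]; exact hbx.eq.symm
    _ = a * b * x := (mul_assoc _ _ _).symm

theorem commute_of_ker_subset_closure_span_mul {R A : Type*} [CommSemiring R]
    [NonUnitalSemiring A] [Module R A] [IsScalarTower R A A] [SMulCommClass R A A]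
    [TopologicalSpace A] [SeparatelyContinuousMul A] [T2Space A]
    (ε : A →ₗ[R] R) (hεm : ∀ a b : A, ε (a * b) = ε a * ε b)
    (hcomm : ∀ a b : A, ε a = 0 → ε b = 0 → Commute a b)
    (hspan : {y : A | ε y = 0} ⊆
      closure (Submodule.span R {y : A | ∃ a b : A, ε a = 0 ∧ ε b = 0 ∧ y = a * b}))
    (x : A) {y : A} (hy : ε y = 0) : Commute x y := by
  let C := NonUnitalSubalgebra.centralizer R {x}
  have hspan_le : Submodule.span R {y : A | ∃ a b : A, ε a = 0 ∧ ε b = 0 ∧ y = a * b} ≤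
      C.toSubmodule := by
    rw [Submodule.span_le]
    rintro _ ⟨a, b, ha, hb, rfl⟩ _ rfl
    exact commute_mul_of_commute_mul_of_commute_mul
      (hcomm _ _ (by rw [hεm, ha, mul_zero]) hb) (hcomm _ _ ha (by rw [hεm, hb, zero_mul]))
  have hC : IsClosed (C : Set A) := Set.isClosed_centralizer _
  exact closure_minimal hspan_le hC (hspan hy) x rfl

theorem commute_of_ker_central {R A : Type*} [Ring R] [NonUnitalRing A] [Module R A]
    [IsScalarTower R A A] [SMulCommClass R A A] (f : A →ₗ[R] R) {e : A} (he : f e = 1)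
    (hcentral : ∀ x y : A, f y = 0 → Commute x y) (a b : A) : Commute a b := by
  have hsplit (c : A) : f c • e + (c - f c • e) = c := add_sub_cancel _ _
  have hker (c : A) : f (c - f c • e) = 0 := by simp [he]
  have he_comm (c : A) : Commute e c :=
    hsplit c ▸ ((Commute.refl e).smul_right _).add_right (hcentral e _ (hker c))
  rw [← hsplit a]
  exact ((he_comm b).smul_left _).add_left (hcentral b _ (hker a)).symm

theorem commutative_of_augmentation_ideal_commutative_span_general
    {A : Type*} [NonUnitalNormedRing A] [NormedSpace ℂ A]
    [IsScalarTower ℂ A A] [SMulCommClass ℂ A A]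
    (ε : A →L[ℂ] ℂ) (hε0 : ε ≠ 0)
    (hεm : ∀ a b : A, ε (a * b) = ε a * ε b)
    (hcomm : ∀ a b : A, ε a = 0 → ε b = 0 → a * b = b * a)
    (hspan : {x : A | ε x = 0} =
      closure (Submodule.span ℂ
        {x : A | ∃ a b : A, ε a = 0 ∧ ε b = 0 ∧ x = a * b} : Set A)) :
    ∀ a b : A, a * b = b * a := by
  obtain ⟨e, he⟩ := LinearMap.surjective (ContinuousLinearMap.coe_injective.ne hε0) 1
  have hcentral := commute_of_ker_subset_closure_span_mul (ε : A →ₗ[ℂ] ℂ) hεm hcomm hspan.subset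
  exact fun a b => commute_of_ker_central (ε : A →ₗ[ℂ] ℂ) he hcentral a b

/-- Let `A` be a complex Banach algebra and `ε : A → ℂ` a nonzero
continuous character with augmentation ideal `A₀ = ker ε`. If `A₀` is
commutative and `A₀` equals the closed linear span of products of elements of
`A₀`, then `A` is commutative. -/
theorem commutative_of_augmentation_ideal_commutative_span
    {A : Type*} [NonUnitalNormedRing A] [NormedSpace ℂ A]
    [IsScalarTower ℂ A A] [SMulCommClass ℂ A A] [CompleteSpace A]
    (ε : A →L[ℂ] ℂ) (hε0 : ε ≠ 0)
    (hεm : ∀ a b : A, ε (a * b) = ε a * ε b)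
    (hcomm : ∀ a b : A, ε a = 0 → ε b = 0 → a * b = b * a)
    (hspan : {x : A | ε x = 0} =
      closure (Submodule.span ℂ
        {x : A | ∃ a b : A, ε a = 0 ∧ ε b = 0 ∧ x = a * b} : Set A)) :
    ∀ a b : A, a * b = b * a :=
  commutative_of_augmentation_ideal_commutative_span_general ε hε0 hεm hcomm hspan
end

section
/- Let A be a complex Banach algebra possessing a two-sided bounded approximate identity, and let ε : A → ℂ be a nonzero continuous algebra homomorphism (character) with A₀ = ker ε. If A₀ is commutative (a b = b a for all a, b ∈ A₀), then A is commutative. -/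
open Filter

/-- Let `A` be a complex Banach algebra possessing a two-sided
bounded approximate identity, and `ε : A → ℂ` a nonzero continuous character
with `A₀ = ker ε`. If `A₀` is commutative, then `A` is commutative. -/
theorem commutative_of_augmentation_ideal_commutative_bai
    {A : Type*} [NonUnitalNormedRing A] [NormedSpace ℂ A]
    [IsScalarTower ℂ A A] [SMulCommClass ℂ A A] [CompleteSpace A]
    (hbai : ∃ (ι : Type) (l : Filter ι) (h : ι → A), l.NeBot ∧
      (∃ C : ℝ, ∀ i, ‖h i‖ ≤ C) ∧
      (∀ a : A, Tendsto (fun i => a * h i) l (nhds a)) ∧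
      (∀ a : A, Tendsto (fun i => h i * a) l (nhds a)))
    (ε : A →L[ℂ] ℂ) (hε0 : ε ≠ 0)
    (hεm : ∀ a b : A, ε (a * b) = ε a * ε b)
    (hcomm : ∀ a b : A, ε a = 0 → ε b = 0 → a * b = b * a) :
    ∀ a b : A, a * b = b * a := by
  obtain ⟨ι, l, h, hne, ⟨C, hC⟩, hr, hl⟩ := hbai
  obtain ⟨v, hv⟩ : ∃ v : A, ε v ≠ 0 := by
    by_contra hcon
    push_neg at hcon
    exact hε0 (by ext x; simpa using hcon x)
  obtain ⟨u, hu⟩ : ∃ u : A, ε u = 1 :=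
    ⟨(ε v)⁻¹ • v, by simp [inv_mul_cancel₀ hv]⟩
  -- ε (h i) tends to 1
  have hεh : Tendsto (fun i => ε (h i)) l (nhds 1) := by
    have h1 : Tendsto (fun i => ε (u * h i)) l (nhds (ε u)) :=
      (ε.continuous.tendsto u).comp (hr u)
    have : (fun i => ε (u * h i)) = fun i => ε (h i) := by
      funext i; rw [hεm, hu, one_mul]
    rwa [this, hu] at h1
  -- u commutes with the kernel
  have key : ∀ x : A, ε x = 0 → x * u = u * x := by
    intro x hx
    have heq : (fun i => x * h i - ε (h i) • (x * u))
        = fun i => h i * x - ε (h i) • (u * x) := by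
      funext i
      have hx0 : ε (h i - ε (h i) • u) = 0 := by
        simp [map_sub, map_smul, hu]
      have := hcomm x (h i - ε (h i) • u) hx hx0
      calc x * h i - ε (h i) • (x * u)
          = x * (h i - ε (h i) • u) := by
            rw [mul_sub, mul_smul_comm]
        _ = (h i - ε (h i) • u) * x := this
        _ = h i * x - ε (h i) • (u * x) := by
            rw [sub_mul, smul_mul_assoc]
    have t1 : Tendsto (fun i => x * h i - ε (h i) • (x * u)) l
        (nhds (x - (1 : ℂ) • (x * u))) :=
      (hr x).sub (hεh.smul tendsto_const_nhds)
    have t2 : Tendsto (fun i => h i * x - ε (h i) • (u * x)) l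
        (nhds (x - (1 : ℂ) • (u * x))) :=
      (hl x).sub (hεh.smul tendsto_const_nhds)
    rw [heq] at t1
    have := tendsto_nhds_unique t1 t2
    simp only [one_smul] at this
    exact sub_right_inj.mp this
  intro a b
  set a₀ : A := a - ε a • u with ha₀
  set b₀ : A := b - ε b • u with hb₀
  have hεa₀ : ε a₀ = 0 := by simp [ha₀, map_sub, map_smul, hu]
  have hεb₀ : ε b₀ = 0 := by simp [hb₀, map_sub, map_smul, hu]
  have h1 := hcomm a₀ b₀ hεa₀ hεb₀
  have h2 := key a₀ hεa₀
  have h3 := key b₀ hεb₀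
  have ha : a = a₀ + ε a • u := by simp [ha₀]
  have hb : b = b₀ + ε b • u := by simp [hb₀]
  rw [ha, hb]
  simp only [add_mul, mul_add, smul_mul_assoc, mul_smul_comm, smul_smul,
    smul_add]
  rw [h1, h2, h3]
  module
end
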